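/- arXiv:2007.11456 — 9 statements merged into one kernel-verified Lean document; each statement's English description precedes it below -/
import Mathlib

section
/- Let n ≥ 2 and i, j, k, l ∈ ℕ. If k ≥ j, then { a·b | a ∈ P_n^{i,j}, b ∈ P_n^{k,l} } ∪ {0} = P_n^{i+k-j, l} ∪ {0}; and if k ≤ j, then { a·b | a ∈ P_n^{i,j}, b ∈ P_n^{k,l} } ∪ {0} = P_n^{i, j-k+l} ∪ {0}. -/
/-- Words in the alphabet `{1,…,n}`. -/
abbrev W (n : ℕ) := List (Fin n)

/-- The product of the polycyclic monoid `P_n`, realized on `Option (W n × W n)`,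
with `none` the zero element and `some (μ, ν)` representing `s_μ s_ν*`. -/
def pmul {n : ℕ} : Option (W n × W n) → Option (W n × W n) → Option (W n × W n)
  | some (μ, ν), some (κ, lam) =>
      if ν <+: κ then some (μ ++ κ.drop ν.length, lam)
      else if κ <+: ν then some (μ, lam ++ ν.drop κ.length)
      else none
  | _, _ => none

/-- The involution of `P_n`. -/
def pstar {n : ℕ} : Option (W n × W n) → Option (W n × W n)
  | some (μ, ν) => some (ν, μ)
  | none => none

/-- `P_n^{k,l}`, the set of elements `s_μ s_ν*` with `|μ| = k` and `|ν| = l`. -/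
def Pkl (n k l : ℕ) : Set (Option (W n × W n)) :=
  {x | ∃ μ ν : W n, x = some (μ, ν) ∧ μ.length = k ∧ ν.length = l}

/-- `M_n = ⋃_k P_n^{k,k} ∪ {0}`. -/
def Mn (n : ℕ) : Set (Option (W n × W n)) :=
  {x | x = none ∨ ∃ μ ν : W n, x = some (μ, ν) ∧ μ.length = ν.length}

/-- A wide subsemigroup of `P_n`: closed under the product and the involution, and
containing all idempotents (which are `0` and the `s_κ s_κ*`). -/
def IsWideSub (n : ℕ) (T : Set (Option (W n × W n))) : Prop :=
  (∀ a b, a ∈ T → b ∈ T → pmul a b ∈ T) ∧ (∀ a ∈ T, pstar a ∈ T) ∧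
    (none ∈ T ∧ ∀ κ : W n, some (κ, κ) ∈ T)


/-! The case `k ≤ j` is the image of the case `j ≤ k` under the involution, since
`(a * b)* = b* * a*` and `(P_n^{i,j})* = P_n^{j,i}`. When `j ≤ k`, a nonzero product
`s_μ s_ν* · s_κ s_λ*` is `s_{μ κ'} s_λ*` with `κ = ν κ'`; conversely `s_μ s_λ*` factors through
any word `w` of length `j` as `s_{μ₁} s_w* · s_{w μ₂} s_λ*` with `μ = μ₁ μ₂`, `|μ₁| = i`. -/

section

variable {n : ℕ}

theorem pstar_pmul (a b : Option (W n × W n)) : pstar (pmul a b) = pmul (pstar b) (pstar a) := by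
  rcases a with _ | ⟨μ, ν⟩ <;> rcases b with _ | ⟨κ, lam⟩ <;> try rfl
  simp only [pmul, pstar]
  by_cases hνκ : ν <+: κ <;> by_cases hκν : κ <+: ν <;> simp only [hνκ, hκν, if_true, if_false]
  -- both prefixes hold only when `ν = κ`, and then both formulas give `some (lam, μ)`
  obtain rfl := hνκ.eq_of_length (le_antisymm hνκ.length_le hκν.length_le)
  simp

theorem image_pstar_pkl (k l : ℕ) : pstar '' Pkl n k l = Pkl n l k := by
  ext x
  constructor
  · rintro ⟨_, ⟨μ, ν, rfl, hμ, hν⟩, rfl⟩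
    exact ⟨ν, μ, rfl, hν, hμ⟩
  · rintro ⟨ν, μ, rfl, hν, hμ⟩
    exact ⟨some (μ, ν), ⟨μ, ν, rfl, hμ, hν⟩, rfl⟩

theorem image_pstar_image2_pmul (s t : Set (Option (W n × W n))) :
    pstar '' Set.image2 pmul s t = Set.image2 pmul (pstar '' t) (pstar '' s) := by
  rw [Set.image_image2, Set.image2_image_left, Set.image2_image_right, Set.image2_swap]
  simp only [pstar_pmul]

theorem pmul_some_of_length_le {μ ν κ lam : W n} (h : ν.length ≤ κ.length) :
    pmul (some (μ, ν)) (some (κ, lam)) =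
      if ν <+: κ then some (μ ++ κ.drop ν.length, lam) else none := by
  simp only [pmul]
  split_ifs with hνκ hκν
  · rfl
  · exact absurd (hκν.eq_of_length (le_antisymm hκν.length_le h) ▸ List.prefix_refl ν) hνκ
  · rfl

theorem pmul_mem_pkl_of_le {i j k l : ℕ} (hjk : j ≤ k) {a b : Option (W n × W n)}
    (ha : a ∈ Pkl n i j) (hb : b ∈ Pkl n k l) : pmul a b ∈ Pkl n (i + k - j) l ∪ {none} := by
  obtain ⟨μ, ν, rfl, hμ, hν⟩ := ha
  obtain ⟨κ, lam, rfl, hκ, hlam⟩ := hb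
  rw [pmul_some_of_length_le (by omega)]
  split_ifs
  · exact Or.inl ⟨_, _, rfl, by simp [hμ, hν, hκ]; omega, hlam⟩
  · exact Or.inr rfl

theorem pkl_subset_image2_pmul (hn : 0 < n) {i j k l : ℕ} (hjk : j ≤ k) :
    Pkl n (i + k - j) l ⊆ Set.image2 pmul (Pkl n i j) (Pkl n k l) := by
  rintro _ ⟨μ, lam, rfl, hμ, hlam⟩
  set w := List.replicate j (⟨0, hn⟩ : Fin n)
  refine ⟨some (μ.take i, w), ⟨_, _, rfl, by simp; omega, by simp [w]⟩,
    some (w ++ μ.drop i, lam), ⟨_, _, rfl, by simp [w, hμ]; omega, hlam⟩, ?_⟩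
  rw [pmul_some_of_length_le (by simp), if_pos (List.prefix_append _ _), List.drop_left,
    List.take_append_drop]

theorem image2_pmul_pkl_union_of_le (hn : 0 < n) {i j k l : ℕ} (hjk : j ≤ k) :
    Set.image2 pmul (Pkl n i j) (Pkl n k l) ∪ {none} = Pkl n (i + k - j) l ∪ {none} :=
  Set.Subset.antisymm
    (Set.union_subset (Set.image2_subset_iff.2 fun _ ha _ hb => pmul_mem_pkl_of_le hjk ha hb)
      Set.subset_union_right)
    (Set.union_subset_union_left _ (pkl_subset_image2_pmul hn hjk))

theorem image2_pmul_pkl_union_of_ge (hn : 0 < n) {i j k l : ℕ} (hkj : k ≤ j) :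
    Set.image2 pmul (Pkl n i j) (Pkl n k l) ∪ {none} = Pkl n i (j - k + l) ∪ {none} := by
  have h := congrArg (Set.image pstar) (image2_pmul_pkl_union_of_le hn (i := l) (l := i) hkj)
  simp only [Set.image_union, image_pstar_image2_pmul, image_pstar_pkl,
    Set.image_singleton] at h
  rwa [show l + j - k = j - k + l by omega] at h

end

/-- `P_n^{i,j} · P_n^{k,l} ∪ {0} = P_n^{i+k-j,l} ∪ {0}` if `k ≥ j`, and
`P_n^{i,j} · P_n^{k,l} ∪ {0} = P_n^{i,j-k+l} ∪ {0}` if `k ≤ j`. -/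
theorem pkl_mul_pkl (n : ℕ) (hn : 2 ≤ n) (i j k l : ℕ) :
    (k ≥ j → Set.image2 pmul (Pkl n i j) (Pkl n k l) ∪ {none} =
      Pkl n (i + k - j) l ∪ {none}) ∧
    (k ≤ j → Set.image2 pmul (Pkl n i j) (Pkl n k l) ∪ {none} =
      Pkl n i (j - k + l) ∪ {none}) :=
  ⟨image2_pmul_pkl_union_of_le (by omega), image2_pmul_pkl_union_of_ge (by omega)⟩
end

section
/- Let n ≥ 2 and let T ⊆ P_n be a wide subsemigroup with M_n ⊆ T. If some (μ,ν) ∈ T, then P_n^{|μ|,|ν|} ⊆ T. -/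
theorem pmul_some_some_self {n : ℕ} (α μ ν : W n) :
    pmul (some (α, μ)) (some (μ, ν)) = some (α, ν) := by
  simp [pmul]

theorem some_mem_Mn {n : ℕ} {α β : W n} (h : α.length = β.length) : some (α, β) ∈ Mn n :=
  Or.inr ⟨α, β, rfl, h⟩

/-- Since `M_n ⊆ T`, the element `s_α s_β*` of `P_n^{|μ|,|ν|}` is reached as
`(s_α s_μ*) (s_μ s_ν*) (s_ν s_β*)`. -/
theorem mem_imp_Pkl_subset_general (n : ℕ) (T : Set (Option (W n × W n)))
    (hT : IsWideSub n T) (hM : Mn n ⊆ T) (μ ν : W n)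
    (h : some (μ, ν) ∈ T) :
    Pkl n μ.length ν.length ⊆ T := by
  rintro _ ⟨α, β, rfl, hα, hβ⟩
  have hαμ : some (α, μ) ∈ T := hM (some_mem_Mn hα)
  have hνβ : some (ν, β) ∈ T := hM (some_mem_Mn hβ.symm)
  have hαβ := hT.1 _ _ (hT.1 _ _ hαμ h) hνβ
  rwa [pmul_some_some_self, pmul_some_some_self] at hαβ

/-- if `T` is a wide subsemigroup of `P_n` containing `M_n` and
`s_μ s_ν* ∈ T`, then `P_n^{|μ|,|ν|} ⊆ T`. -/
theorem mem_imp_Pkl_subset (n : ℕ) (hn : 2 ≤ n) (T : Set (Option (W n × W n)))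
    (hT : IsWideSub n T) (hM : Mn n ⊆ T) (μ ν : W n)
    (h : some (μ, ν) ∈ T) :
    Pkl n μ.length ν.length ⊆ T :=
  mem_imp_Pkl_subset_general n T hT hM μ ν h
end

section
/- Let n ≥ 2, let T ⊆ P_n be a wide subsemigroup with M_n ⊆ T, and let k, l ∈ ℕ. If P_n^{k,l} ⊆ T, then P_n^{l,k} ⊆ T and P_n^{k+1,l+1} ⊆ T. -/
theorem pmul_some_append {n : ℕ} (μ ν κ lam : W n) :
    pmul (some (μ, ν)) (some (ν ++ κ, lam)) = some (μ ++ κ, lam) := by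
  simp [pmul]

theorem Pkl_swap_subset {n k l : ℕ} {T : Set (Option (W n × W n))}
    (hstar : ∀ a ∈ T, pstar a ∈ T) (h : Pkl n k l ⊆ T) : Pkl n l k ⊆ T := by
  rintro _ ⟨μ, ν, rfl, hμ, hν⟩
  exact hstar _ (h ⟨ν, μ, rfl, hν, hμ⟩)

/-- Split off the last letter `c` of `μ = μ'c`: `s_μ s_ν* = (s_{μ'} s_{ν'}*)(s_{ν'c} s_ν*)`,
where `ν'` is the first `l` letters of `ν`, and the second factor lies in `M_n`. -/
theorem Pkl_succ_subset {n k l : ℕ} {T : Set (Option (W n × W n))}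
    (hmul : ∀ a b, a ∈ T → b ∈ T → pmul a b ∈ T) (hM : Mn n ⊆ T) (h : Pkl n k l ⊆ T) :
    Pkl n (k + 1) (l + 1) ⊆ T := by
  rintro _ ⟨μ, ν, rfl, hμ, hν⟩
  have hleft : some (μ.take k, ν.take l) ∈ T := h ⟨_, _, rfl, by simp [hμ], by simp [hν]⟩
  have hright : some (ν.take l ++ μ.drop k, ν) ∈ T :=
    hM (Or.inr ⟨_, _, rfl, by simp [hμ, hν]⟩)
  simpa only [pmul_some_append, List.take_append_drop] using hmul _ _ hleft hright

theorem Pkl_subset_symm_and_succ_general (n : ℕ)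
    (T : Set (Option (W n × W n))) (hT : IsWideSub n T) (hM : Mn n ⊆ T)
    (k l : ℕ) (h : Pkl n k l ⊆ T) :
    Pkl n l k ⊆ T ∧ Pkl n (k + 1) (l + 1) ⊆ T :=
  ⟨Pkl_swap_subset hT.2.1 h, Pkl_succ_subset hT.1 hM h⟩

/-- if `T` is a wide subsemigroup of `P_n` containing `M_n` and
`P_n^{k,l} ⊆ T`, then `P_n^{l,k} ⊆ T` and `P_n^{k+1,l+1} ⊆ T`. -/
theorem Pkl_subset_symm_and_succ (n : ℕ) (hn : 2 ≤ n)
    (T : Set (Option (W n × W n))) (hT : IsWideSub n T) (hM : Mn n ⊆ T)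
    (k l : ℕ) (h : Pkl n k l ⊆ T) :
    Pkl n l k ⊆ T ∧ Pkl n (k + 1) (l + 1) ⊆ T :=
  Pkl_subset_symm_and_succ_general n T hT hM k l h
end

section
/- Let n ≥ 2, let T ⊆ P_n be a β-join closed wide subsemigroup with M_n ⊆ T, and let k, l ≥ 1 be natural numbers. If P_n^{k,l} ⊆ T, then P_n^{k-1,l-1} ⊆ T. -/
/-- The cylinder set `C(μ) ⊆ {1,…,n}^ℕ` of sequences beginning with `μ`. -/
def Cyl {n : ℕ} (μ : W n) : Set (ℕ → Fin n) :=
  {x | ∀ (i : ℕ) (h : i < μ.length), x i = μ[i]}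

/-- A subsemigroup `T ⊆ P_n` is `β`-join closed if for every `s = s_μ s_ν*`:
`s ∈ T` iff there is a finite set `F` of words such that `s · s_κ s_κ* ∈ T` for
all `κ ∈ F` and `C(ν) ⊆ ⋃_{κ ∈ F} C(κ)`. -/
def IsJoinClosed (n : ℕ) (T : Set (Option (W n × W n))) : Prop :=
  ∀ μ ν : W n, some (μ, ν) ∈ T ↔
    ∃ F : Finset (W n), (∀ κ ∈ F, pmul (some (μ, ν)) (some (κ, κ)) ∈ T) ∧
      Cyl ν ⊆ ⋃ κ ∈ F, Cyl κ

/-! Restricting `s_μ s_ν*` to the cylinders `C(ν a)`, `a ∈ {1,…,n}`, gives the elements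
`s_μ s_ν* · s_{νa} s_{νa}* = s_{μa} s_{νa}*` of `P_n^{k,l}`; these cylinders cover `C(ν)`, so
`β`-join closedness puts `s_μ s_ν*` in `T`. -/

theorem pmul_some_append_singleton {n : ℕ} (μ ν : W n) (a : Fin n) :
    pmul (some (μ, ν)) (some (ν ++ [a], ν ++ [a])) = some (μ ++ [a], ν ++ [a]) := by
  simp [pmul]

theorem Cyl_subset_iUnion_Cyl_append_singleton {n : ℕ} (ν : W n) :
    Cyl ν ⊆ ⋃ κ ∈ Finset.univ.image (fun a : Fin n => ν ++ [a]), Cyl κ := by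
  intro x hx
  simp only [Set.mem_iUnion, Finset.mem_image, Finset.mem_univ, true_and, exists_prop,
    exists_exists_eq_and]
  refine ⟨x ν.length, fun i hi => ?_⟩
  rw [List.length_append, List.length_singleton] at hi
  rcases Nat.lt_or_ge i ν.length with hlt | hge
  · rw [List.getElem_append_left hlt]
    exact hx i hlt
  · obtain rfl : i = ν.length := by omega
    simp

theorem IsJoinClosed.mem_of_forall_append_singleton_mem {n : ℕ} {T : Set (Option (W n × W n))}
    (hJ : IsJoinClosed n T) {μ ν : W n} (h : ∀ a : Fin n, some (μ ++ [a], ν ++ [a]) ∈ T) :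
    some (μ, ν) ∈ T := by
  refine (hJ μ ν).2 ⟨_, ?_, Cyl_subset_iUnion_Cyl_append_singleton ν⟩
  simp only [Finset.mem_image, Finset.mem_univ, true_and, forall_exists_index,
    forall_apply_eq_imp_iff]
  intro a
  rw [pmul_some_append_singleton]
  exact h a

theorem Pkl_subset_pred_general (n : ℕ) (T : Set (Option (W n × W n)))
    (hJ : IsJoinClosed n T)
    (k l : ℕ) (hk : 1 ≤ k) (hl : 1 ≤ l) (h : Pkl n k l ⊆ T) :
    Pkl n (k - 1) (l - 1) ⊆ T := by
  rintro _ ⟨μ, ν, rfl, hμ, hν⟩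
  refine hJ.mem_of_forall_append_singleton_mem fun a => h ⟨μ ++ [a], ν ++ [a], rfl, ?_, ?_⟩
  · rw [List.length_append, List.length_singleton, hμ, Nat.sub_add_cancel hk]
  · rw [List.length_append, List.length_singleton, hν, Nat.sub_add_cancel hl]

/-- if `T` is a `β`-join closed wide subsemigroup of `P_n` containing
`M_n`, `k, l ≥ 1` and `P_n^{k,l} ⊆ T`, then `P_n^{k-1,l-1} ⊆ T`. -/
theorem Pkl_subset_pred (n : ℕ) (hn : 2 ≤ n) (T : Set (Option (W n × W n)))
    (hT : IsWideSub n T) (hJ : IsJoinClosed n T) (hM : Mn n ⊆ T)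
    (k l : ℕ) (hk : 1 ≤ k) (hl : 1 ≤ l) (h : Pkl n k l ⊆ T) :
    Pkl n (k - 1) (l - 1) ⊆ T :=
  Pkl_subset_pred_general n T hJ k l hk hl h
end

section
/- Let n ≥ 2. For every m ∈ ℕ, the set P_n^m is a β-join closed wide subsemigroup of P_n containing M_n. -/
/-- `P_n^m = { s_μ s_ν* | |μ| ≡ |ν| (mod m) } ∪ {0}`. -/
def Pm (n m : ℕ) : Set (Option (W n × W n)) :=
  {x | x = none ∨ ∃ μ ν : W n, x = some (μ, ν) ∧ μ.length ≡ ν.length [MOD m]}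

/-!
Every nonzero product `s_μ s_ν* · s_κ s_ρ*` equals `s_{μa} s_{ρb}*` for words `a`, `b` with
`νa = κb`. Comparing lengths, `|μa| - |ρb| = (|μ| - |ν|) + (|κ| - |ρ|)`, so the length defect
mod `m` is additive, which makes `P_n^m` a subsemigroup. For join closedness, a cover of the
(nonempty, as `n ≥ 1`) cylinder `C(ν)` contains some `C(κ)` meeting it, so `κ` is comparable
with `ν` in the prefix order; then `s_μ s_ν* · s_κ s_κ*` is nonzero and has the same defect as
`s_μ s_ν*`.
-/

section Polycyclic

variable {n : ℕ}

lemma exists_append_of_pmul_eq_some {μ ν κ ρ α β : W n}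
    (h : pmul (some (μ, ν)) (some (κ, ρ)) = some (α, β)) :
    ∃ a b : W n, α = μ ++ a ∧ β = ρ ++ b ∧ ν ++ a = κ ++ b := by
  simp only [pmul] at h
  split_ifs at h with hνκ hκν
  · obtain ⟨t, rfl⟩ := hνκ
    simp only [List.drop_left, Option.some.injEq, Prod.mk.injEq] at h
    exact ⟨t, [], h.1.symm, by simp [h.2], by simp⟩
  · obtain ⟨t, rfl⟩ := hκν
    simp only [List.drop_left, Option.some.injEq, Prod.mk.injEq] at h
    exact ⟨[], t, by simp [h.1], h.2.symm, by simp⟩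

lemma pmul_ne_none_of_prefix_or_prefix {μ ν κ ρ : W n} (h : ν <+: κ ∨ κ <+: ν) :
    pmul (some (μ, ν)) (some (κ, ρ)) ≠ none := by
  simp only [pmul]
  split_ifs <;> simp_all

lemma pmul_some_self (μ ν : W n) : pmul (some (μ, ν)) (some (ν, ν)) = some (μ, ν) := by
  simp [pmul]

lemma nonempty_Cyl (hn : 0 < n) (ν : W n) : (Cyl ν).Nonempty :=
  ⟨fun i => if h : i < ν.length then ν[i] else ⟨0, hn⟩, fun i h => by simp [h]⟩

lemma prefix_of_mem_Cyl_of_length_le {x : ℕ → Fin n} {ν κ : W n} (hν : x ∈ Cyl ν)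
    (hκ : x ∈ Cyl κ) (hle : κ.length ≤ ν.length) : κ <+: ν := by
  rw [List.prefix_iff_eq_take]
  refine List.ext_getElem (by simp [hle]) fun i hi _ => ?_
  rw [List.getElem_take, ← hκ i hi, ← hν i (hi.trans_le hle)]

lemma prefix_or_prefix_of_mem_Cyl {x : ℕ → Fin n} {ν κ : W n} (hν : x ∈ Cyl ν)
    (hκ : x ∈ Cyl κ) : ν <+: κ ∨ κ <+: ν := by
  rcases le_total κ.length ν.length with hle | hle
  · exact Or.inr (prefix_of_mem_Cyl_of_length_le hν hκ hle)
  · exact Or.inl (prefix_of_mem_Cyl_of_length_le hκ hν hle)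

lemma exists_prefix_or_prefix_of_Cyl_subset (hn : 0 < n) {ν : W n} {F : Finset (W n)}
    (hcov : Cyl ν ⊆ ⋃ κ ∈ F, Cyl κ) : ∃ κ ∈ F, ν <+: κ ∨ κ <+: ν := by
  obtain ⟨x, hx⟩ := nonempty_Cyl hn ν
  obtain ⟨κ, hκF, hxκ⟩ : ∃ κ ∈ F, x ∈ Cyl κ := by simpa using hcov hx
  exact ⟨κ, hκF, prefix_or_prefix_of_mem_Cyl hx hxκ⟩

end Polycyclic

section Pm

variable {n m : ℕ}

lemma none_mem_Pm : (none : Option (W n × W n)) ∈ Pm n m := Or.inl rfl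

@[simp]
lemma some_mem_Pm_iff {μ ν : W n} : some (μ, ν) ∈ Pm n m ↔ μ.length ≡ ν.length [MOD m] := by
  simp [Pm]

lemma pmul_mem_Pm {a b : Option (W n × W n)} (ha : a ∈ Pm n m) (hb : b ∈ Pm n m) :
    pmul a b ∈ Pm n m := by
  rcases ha with rfl | ⟨μ, ν, rfl, hμν⟩
  · exact none_mem_Pm
  rcases hb with rfl | ⟨κ, ρ, rfl, hκρ⟩
  · exact none_mem_Pm
  rcases hprod : pmul (some (μ, ν)) (some (κ, ρ)) with _ | ⟨α, β⟩
  · exact none_mem_Pm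
  obtain ⟨a, b, rfl, rfl, hab⟩ := exists_append_of_pmul_eq_some hprod
  have hlen : ν.length + a.length = κ.length + b.length := by
    simpa using congrArg List.length hab
  rw [some_mem_Pm_iff, List.length_append, List.length_append]
  calc μ.length + a.length ≡ ν.length + a.length [MOD m] := hμν.add_right _
    _ = κ.length + b.length := hlen
    _ ≡ ρ.length + b.length [MOD m] := hκρ.add_right _

lemma pstar_mem_Pm {a : Option (W n × W n)} (ha : a ∈ Pm n m) : pstar a ∈ Pm n m := by
  rcases ha with rfl | ⟨μ, ν, rfl, h⟩
  · exact none_mem_Pm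
  · exact some_mem_Pm_iff.2 h.symm

lemma Pm_isWideSub : IsWideSub n (Pm n m) :=
  ⟨fun _ _ => pmul_mem_Pm, fun _ => pstar_mem_Pm, none_mem_Pm,
    fun _ => some_mem_Pm_iff.2 rfl⟩

lemma Mn_subset_Pm : Mn n ⊆ Pm n m := by
  rintro a (rfl | ⟨μ, ν, rfl, h⟩)
  · exact none_mem_Pm
  · exact some_mem_Pm_iff.2 (h ▸ rfl)

lemma mem_Pm_of_pmul_idempotent_mem {μ ν κ : W n} (hcomp : ν <+: κ ∨ κ <+: ν)
    (h : pmul (some (μ, ν)) (some (κ, κ)) ∈ Pm n m) : some (μ, ν) ∈ Pm n m := by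
  obtain ⟨⟨α, β⟩, hprod⟩ := Option.ne_none_iff_exists'.1 (pmul_ne_none_of_prefix_or_prefix hcomp)
  obtain ⟨a, b, rfl, rfl, hab⟩ := exists_append_of_pmul_eq_some hprod
  have hlen : ν.length + a.length = κ.length + b.length := by
    simpa using congrArg List.length hab
  rw [hprod, some_mem_Pm_iff, List.length_append, List.length_append, ← hlen] at h
  exact some_mem_Pm_iff.2 (Nat.ModEq.add_right_cancel' _ h)

lemma Pm_isJoinClosed (hn : 0 < n) : IsJoinClosed n (Pm n m) := by
  refine fun μ ν => ⟨fun h => ⟨{ν}, by simpa [pmul_some_self] using h, by simp⟩, ?_⟩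
  rintro ⟨F, hF, hcov⟩
  obtain ⟨κ, hκF, hcomp⟩ := exists_prefix_or_prefix_of_Cyl_subset hn hcov
  exact mem_Pm_of_pmul_idempotent_mem hcomp (hF κ hκF)

end Pm

/-- for every `m ∈ ℕ`, `P_n^m` is a `β`-join closed wide subsemigroup
of `P_n` containing `M_n`. -/
theorem Pm_joinClosed_wide (n : ℕ) (hn : 2 ≤ n) (m : ℕ) :
    IsWideSub n (Pm n m) ∧ Mn n ⊆ Pm n m ∧ IsJoinClosed n (Pm n m) :=
  ⟨Pm_isWideSub, Mn_subset_Pm, Pm_isJoinClosed (by omega)⟩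
end

section
/- Let X be a locally compact Hausdorff space, E a meet-semilattice with least element ⊥, and D : E → Set X a strongly tight family of domains such that D e ≠ ∅ for every e ≠ ⊥. For x ∈ X define ξ_x : E → Bool by ξ_x e = true iff x ∈ D e. Then each ξ_x is an ultracharacter of E, and the map x ↦ ξ_x is a homeomorphism from X onto the ultracharacter space Ê_∞ (equipped with the subspace topology of the product topology on E → Bool). -/
/-- A character of a meet-semilattice `E` with least element `⊥`: a map
`ξ : E → Bool` with `ξ (e ⊓ f) = ξ e && ξ f`, `ξ ⊥ = false`, and `ξ e = true`
for at least one `e`. -/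
def IsChar {E : Type*} [SemilatticeInf E] [OrderBot E] (ξ : E → Bool) : Prop :=
  (∀ e f : E, ξ (e ⊓ f) = (ξ e && ξ f)) ∧ ξ ⊥ = false ∧ ∃ e : E, ξ e = true

/-- An ultracharacter: a character maximal in the pointwise order. -/
def IsUltra {E : Type*} [SemilatticeInf E] [OrderBot E] (ξ : E → Bool) : Prop :=
  IsChar ξ ∧ ∀ η : E → Bool, IsChar η → (∀ e, ξ e = true → η e = true) → η = ξ

/-- A strongly tight family of domains on `X` indexed by the meet-semilattice `E`:
`D ⊥ = ∅`, `D (e ⊓ f) = D e ∩ D f`, each `D e` is compact open, and the `D e`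
form a basis for the topology of `X`. -/
structure StronglyTightFamily (E X : Type*) [SemilatticeInf E] [OrderBot E]
    [TopologicalSpace X] (D : E → Set X) : Prop where
  bot_eq : D ⊥ = ∅
  inf_eq : ∀ e f : E, D (e ⊓ f) = D e ∩ D f
  isCompact : ∀ e : E, IsCompact (D e)
  isOpen : ∀ e : E, IsOpen (D e)
  isBasis : TopologicalSpace.IsTopologicalBasis (Set.range D)

attribute [local instance] Classical.propDecidable

/-!
For `x ∈ X` the character `ξ_x` is the set of domains containing `x`. Conversely, the domains
`D e` with `η e = true` for a character `η` form a downward directed family of nonempty compact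
sets, so they share a point `x`, and `η ≤ ξ_x`. Since the domains separate points of the
Hausdorff space `X`, the ultracharacters are exactly the `ξ_x`, and `x ↦ ξ_x` is a bijection.
It sends the basic compact open set `D e` onto the basic open set `{ξ | ξ e = true}` of `Ê_∞`,
and it is continuous because each `D e` is clopen.
-/

namespace StronglyTightFamily

variable {E X : Type*}

noncomputable def pointChar (D : E → Set X) (x : X) : E → Bool := fun e => decide (x ∈ D e)

@[simp]
lemma pointChar_eq_true {D : E → Set X} {x : X} {e : E} : pointChar D x e = true ↔ x ∈ D e :=
  decide_eq_true_iff

variable [SemilatticeInf E] [OrderBot E] [TopologicalSpace X] {D : E → Set X}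

lemma isChar_pointChar (hD : StronglyTightFamily E X D) (x : X) : IsChar (pointChar D x) := by
  refine ⟨fun e f => ?_, by simp [pointChar, hD.bot_eq], ?_⟩
  · simp [pointChar, hD.inf_eq, Bool.decide_and]
  · obtain ⟨-, ⟨e, rfl⟩, hx, -⟩ :=
      hD.isBasis.exists_subset_of_mem_open (Set.mem_univ x) isOpen_univ
    exact ⟨e, pointChar_eq_true.2 hx⟩

lemma eq_of_forall_mem_imp [T1Space X] (hD : StronglyTightFamily E X D) {x y : X}
    (h : ∀ e, x ∈ D e → y ∈ D e) : x = y := by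
  by_contra hxy
  obtain ⟨-, ⟨e, rfl⟩, hx, hsub⟩ :=
    hD.isBasis.exists_subset_of_mem_open (Set.mem_compl_singleton_iff.2 hxy)
      isOpen_compl_singleton
  exact hsub (h e hx) rfl

lemma pointChar_injective [T1Space X] (hD : StronglyTightFamily E X D) :
    Function.Injective (pointChar D) := fun _ _ hxy =>
  hD.eq_of_forall_mem_imp fun _ hx => pointChar_eq_true.1 (hxy ▸ pointChar_eq_true.2 hx)

variable [T2Space X]

lemma exists_forall_mem_of_isChar (hD : StronglyTightFamily E X D)
    (hne : ∀ e : E, e ≠ ⊥ → (D e).Nonempty) {η : E → Bool} (hη : IsChar η) :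
    ∃ x : X, ∀ e, η e = true → x ∈ D e := by
  obtain ⟨hinf, hbot, e₀, he₀⟩ := hη
  have : Nonempty {e : E // η e = true} := ⟨⟨e₀, he₀⟩⟩
  have hdir : Directed (· ⊇ ·) fun e : {e : E // η e = true} => D e := by
    rintro ⟨e, he⟩ ⟨f, hf⟩
    refine ⟨⟨e ⊓ f, by simp [hinf, he, hf]⟩, ?_, ?_⟩ <;> simp [hD.inf_eq]
  have hnonempty (e : {e : E // η e = true}) : (D e).Nonempty :=
    hne e fun h => by simpa [h, hbot] using e.2
  obtain ⟨x, hx⟩ := IsCompact.nonempty_iInter_of_directed_nonempty_isCompact_isClosed _ hdir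
    hnonempty (fun e => hD.isCompact e) fun e => (hD.isCompact e).isClosed
  exact ⟨x, fun e he => Set.mem_iInter.1 hx ⟨e, he⟩⟩

lemma isUltra_pointChar (hD : StronglyTightFamily E X D)
    (hne : ∀ e : E, e ≠ ⊥ → (D e).Nonempty) (x : X) : IsUltra (pointChar D x) := by
  refine ⟨hD.isChar_pointChar x, fun η hη hle => ?_⟩
  obtain ⟨y, hy⟩ := hD.exists_forall_mem_of_isChar hne hη
  obtain rfl : x = y :=
    hD.eq_of_forall_mem_imp fun e hx => hy e (hle e (pointChar_eq_true.2 hx))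
  funext e
  exact Bool.eq_iff_iff.2 ⟨fun h => pointChar_eq_true.2 (hy e h), hle e⟩

lemma exists_pointChar_eq_of_isUltra (hD : StronglyTightFamily E X D)
    (hne : ∀ e : E, e ≠ ⊥ → (D e).Nonempty) {ξ : E → Bool} (hξ : IsUltra ξ) :
    ∃ x, pointChar D x = ξ := by
  obtain ⟨x, hx⟩ := hD.exists_forall_mem_of_isChar hne hξ.1
  exact ⟨x, hξ.2 _ (hD.isChar_pointChar x) fun e he => pointChar_eq_true.2 (hx e he)⟩

lemma continuous_pointChar (hD : StronglyTightFamily E X D) : Continuous (pointChar D) := by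
  refine continuous_pi fun e => ?_
  have : (pointChar D · e) = (D e).boolIndicator := rfl
  rw [this, continuous_boolIndicator_iff_isClopen]
  exact ⟨(hD.isCompact e).isClosed, hD.isOpen e⟩

variable (hD : StronglyTightFamily E X D) (hne : ∀ e : E, e ≠ ⊥ → (D e).Nonempty)

noncomputable def toUltra (x : X) : {ξ : E → Bool // IsUltra ξ} :=
  ⟨pointChar D x, hD.isUltra_pointChar hne x⟩

lemma toUltra_bijective : Function.Bijective (hD.toUltra hne) := by
  refine ⟨fun x y h => hD.pointChar_injective (congrArg Subtype.val h), ?_⟩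
  rintro ⟨ξ, hξ⟩
  obtain ⟨x, hx⟩ := hD.exists_pointChar_eq_of_isUltra hne hξ
  exact ⟨x, Subtype.ext hx⟩

lemma isOpenMap_toUltra : IsOpenMap (hD.toUltra hne) := by
  refine hD.isBasis.isOpenMap_iff.2 ?_
  rintro _ ⟨e, rfl⟩
  have hpre : hD.toUltra hne ⁻¹' {ξ | ξ.1 e = true} = D e := by
    ext x
    simp [toUltra]
  rw [← hpre, (hD.toUltra_bijective hne).2.image_preimage]
  exact (isOpen_discrete {true}).preimage
    ((continuous_apply e).comp (continuous_subtype_val (p := IsUltra)))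

lemma isHomeomorph_toUltra : IsHomeomorph (hD.toUltra hne) :=
  ⟨hD.continuous_pointChar.subtype_mk _, hD.isOpenMap_toUltra hne, hD.toUltra_bijective hne⟩

end StronglyTightFamily

theorem stronglyTight_homeo_ultraChars_general {E X : Type*} [SemilatticeInf E]
    [OrderBot E] [TopologicalSpace X] [T2Space X]
    (D : E → Set X) (hD : StronglyTightFamily E X D)
    (hne : ∀ e : E, e ≠ ⊥ → (D e).Nonempty) :
    ∃ hult : ∀ x : X, IsUltra (fun e => decide (x ∈ D e)),
      IsHomeomorph (fun x : X =>
        (⟨fun e => decide (x ∈ D e), hult x⟩ : {ξ : E → Bool // IsUltra ξ})) := by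
  exact ⟨hD.isUltra_pointChar hne, hD.isHomeomorph_toUltra hne⟩

/-- for a strongly tight family of domains with nonempty domains on
nonzero elements on a locally compact Hausdorff space `X`, the maps
`ξ_x : e ↦ (x ∈ D e)` are ultracharacters, and `x ↦ ξ_x` is a homeomorphism from
`X` onto the ultracharacter space `Ê_∞`. -/
theorem stronglyTight_homeo_ultraChars {E X : Type*} [SemilatticeInf E]
    [OrderBot E] [TopologicalSpace X] [LocallyCompactSpace X] [T2Space X]
    (D : E → Set X) (hD : StronglyTightFamily E X D)
    (hne : ∀ e : E, e ≠ ⊥ → (D e).Nonempty) :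
    ∃ hult : ∀ x : X, IsUltra (fun e => decide (x ∈ D e)),
      IsHomeomorph (fun x : X =>
        (⟨fun e => decide (x ∈ D e), hult x⟩ : {ξ : E → Bool // IsUltra ξ})) :=
  stronglyTight_homeo_ultraChars_general D hD hne
end

section
/- Let X be a locally compact Hausdorff space, E a meet-semilattice with least element ⊥, and D : E → Set X a strongly tight family of domains with D e ≠ ∅ for every e ≠ ⊥. Let 𝒥 ⊆ E be an ideal and C ⊆ 𝒥 a finite subset. Then C is a cover of 𝒥 if and only if ⋃_{c∈C} D c = ⋃_{e∈𝒥} D e. -/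
/-!
If `x ∈ D e` with `e ∈ 𝒥` lay outside the finite union `⋃_{c ∈ C} D c`, which is compact and hence
closed, a basic domain `D f` with `f ≤ e` would contain `x` and miss that union; but `f ∈ 𝒥` is
nonzero, so a cover provides `c ∈ C` with `D (f ⊓ c) = D f ∩ D c` nonempty. Conversely, a point of
`D e` lies in some `D c`, hence in `D (e ⊓ c)`, which forces `e ⊓ c ≠ ⊥`.
-/

def IsCover {E : Type*} [SemilatticeInf E] [OrderBot E] (J C : Set E) : Prop :=
  ∀ e ∈ J, e ≠ ⊥ → ∃ c ∈ C, e ⊓ c ≠ ⊥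

namespace StronglyTightFamily

variable {E X : Type*} [SemilatticeInf E] [OrderBot E] [TopologicalSpace X] {D : E → Set X}

theorem ne_bot_of_nonempty (hD : StronglyTightFamily E X D) {e : E} (h : (D e).Nonempty) :
    e ≠ ⊥ := by
  rintro rfl
  simp [hD.bot_eq] at h

theorem exists_le_mem_subset (hD : StronglyTightFamily E X D) {e : E} {x : X} {U : Set X}
    (hU : IsOpen U) (hx : x ∈ D e ∩ U) : ∃ f ≤ e, x ∈ D f ∧ D f ⊆ U := by
  obtain ⟨_, ⟨f, rfl⟩, hxf, hfU⟩ :=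
    hD.isBasis.exists_subset_of_mem_open hx ((hD.isOpen e).inter hU)
  refine ⟨f ⊓ e, inf_le_right, ?_, ?_⟩ <;> rw [hD.inf_eq]
  · exact ⟨hxf, hx.1⟩
  · exact Set.inter_subset_left.trans (hfU.trans Set.inter_subset_right)

theorem isClosed_biUnion [T2Space X] (hD : StronglyTightFamily E X D) {C : Set E}
    (hC : C.Finite) : IsClosed (⋃ c ∈ C, D c) :=
  hC.isClosed_biUnion fun c _ => (hD.isCompact c).isClosed

theorem biUnion_subset_of_isCover [T2Space X] (hD : StronglyTightFamily E X D)
    (hne : ∀ e : E, e ≠ ⊥ → (D e).Nonempty) {J C : Set E} (hJ : ∀ e ∈ J, ∀ f : E, f ≤ e → f ∈ J)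
    (hC : C.Finite) (hcov : IsCover J C) : ⋃ e ∈ J, D e ⊆ ⋃ c ∈ C, D c := by
  intro x hx
  by_contra hxC
  obtain ⟨e, heJ, hxe⟩ := Set.mem_iUnion₂.mp hx
  obtain ⟨f, hfe, hxf, hfC⟩ :=
    hD.exists_le_mem_subset (hD.isClosed_biUnion hC).isOpen_compl ⟨hxe, hxC⟩
  obtain ⟨c, hcC, hfc⟩ := hcov f (hJ e heJ f hfe) (hD.ne_bot_of_nonempty ⟨x, hxf⟩)
  obtain ⟨y, hyf, hyc⟩ : (D f ∩ D c).Nonempty := hD.inf_eq f c ▸ hne _ hfc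
  exact hfC hyf (Set.mem_biUnion hcC hyc)

theorem isCover_of_biUnion_subset (hD : StronglyTightFamily E X D)
    (hne : ∀ e : E, e ≠ ⊥ → (D e).Nonempty) {J C : Set E}
    (h : ⋃ e ∈ J, D e ⊆ ⋃ c ∈ C, D c) : IsCover J C := by
  intro e heJ he
  obtain ⟨x, hx⟩ := hne e he
  obtain ⟨c, hcC, hxc⟩ := Set.mem_iUnion₂.mp (h (Set.mem_biUnion heJ hx))
  exact ⟨c, hcC, hD.ne_bot_of_nonempty ⟨x, hD.inf_eq e c ▸ ⟨hx, hxc⟩⟩⟩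

end StronglyTightFamily

theorem cover_iff_union_eq_general {E X : Type*} [SemilatticeInf E] [OrderBot E]
    [TopologicalSpace X] [T2Space X]
    (D : E → Set X) (hD : StronglyTightFamily E X D)
    (hne : ∀ e : E, e ≠ ⊥ → (D e).Nonempty)
    (J : Set E) (hJ : ∀ e ∈ J, ∀ f : E, f ≤ e → f ∈ J)
    (C : Finset E) (hC : ↑C ⊆ J) :
    (∀ e ∈ J, e ≠ ⊥ → ∃ c ∈ C, e ⊓ c ≠ ⊥) ↔
      (⋃ c ∈ C, D c) = ⋃ e ∈ J, D e := by
  constructor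
  · intro hcov
    exact (Set.biUnion_subset_biUnion_left hC).antisymm
      (hD.biUnion_subset_of_isCover hne hJ C.finite_toSet hcov)
  · intro heq
    exact hD.isCover_of_biUnion_subset hne heq.symm.subset

/-- for a strongly tight family of domains with nonempty domains on
nonzero elements, an ideal `𝒥 ⊆ E` and a finite subset `C ⊆ 𝒥`: `C` is a cover of
`𝒥` iff `⋃_{c ∈ C} D c = ⋃_{e ∈ 𝒥} D e`. -/
theorem cover_iff_union_eq {E X : Type*} [SemilatticeInf E] [OrderBot E]
    [TopologicalSpace X] [LocallyCompactSpace X] [T2Space X]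
    (D : E → Set X) (hD : StronglyTightFamily E X D)
    (hne : ∀ e : E, e ≠ ⊥ → (D e).Nonempty)
    (J : Set E) (hJ : ∀ e ∈ J, ∀ f : E, f ≤ e → f ∈ J)
    (C : Finset E) (hC : ↑C ⊆ J) :
    (∀ e ∈ J, e ≠ ⊥ → ∃ c ∈ C, e ⊓ c ≠ ⊥) ↔
      (⋃ c ∈ C, D c) = ⋃ e ∈ J, D e :=
  cover_iff_union_eq_general D hD hne J hJ C hC
end

section
/- Let E be a meet-semilattice with a least element ⊥ and a greatest element ⊤ (a unit). Then Ê_tight = Ê_∞ if and only if the ultracharacter space Ê_∞ is compact. -/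
section Characters

variable {E : Type*} [SemilatticeInf E] [OrderBot E] [OrderTop E]

lemma isChar_iff_apply_top {ξ : E → Bool} :
    IsChar ξ ↔ (∀ e f : E, ξ (e ⊓ f) = (ξ e && ξ f)) ∧ ξ ⊥ = false ∧ ξ ⊤ = true := by
  refine and_congr_right fun hmul => and_congr_right fun _ => ⟨?_, fun htop => ⟨⊤, htop⟩⟩
  rintro ⟨e, he⟩
  have h := hmul e ⊤
  rw [inf_top_eq, he, Bool.true_and] at h
  exact h.symm

lemma isClosed_setOf_isChar : IsClosed {ξ : E → Bool | IsChar ξ} := by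
  simp only [isChar_iff_apply_top, Set.ofPred_and, Set.ofPred_forall]
  have hmeet (e f : E) : Continuous fun ξ : E → Bool => ξ e && ξ f :=
    (continuous_of_discreteTopology (f := fun p : Bool × Bool => p.1 && p.2)).comp₂
      (continuous_apply e) (continuous_apply f)
  refine .inter (isClosed_iInter fun e => isClosed_iInter fun f => ?_) (.inter ?_ ?_)
  · exact isClosed_eq (continuous_apply _) (hmeet e f)
  · exact isClosed_eq (continuous_apply _) continuous_const
  · exact isClosed_eq (continuous_apply _) continuous_const

end Characters

/-- for a meet-semilattice with least element `⊥` and greatest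
element `⊤`, `Ê_tight = Ê_∞` iff the ultracharacter space `Ê_∞` is compact. -/
theorem tight_eq_ultra_iff_compact {E : Type*} [SemilatticeInf E] [OrderBot E]
    [OrderTop E] :
    ({ξ : E → Bool | IsChar ξ} ∩ closure {ξ : E → Bool | IsUltra ξ} =
      {ξ : E → Bool | IsUltra ξ}) ↔
      IsCompact {ξ : E → Bool | IsUltra ξ} := by
  have htight : {ξ : E → Bool | IsChar ξ} ∩ closure {ξ : E → Bool | IsUltra ξ} =
      closure {ξ : E → Bool | IsUltra ξ} :=
    Set.inter_eq_right.mpr <| isClosed_setOf_isChar.closure_subset_iff.mpr fun _ hξ => hξ.1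
  rw [htight, closure_eq_iff_isClosed]
  exact ⟨IsClosed.isCompact, IsCompact.isClosed⟩
end

section
/- Let E be a meet-semilattice with least element ⊥ such that the ultracharacter space Ê_∞ is compact. For e ∈ E set D_e^∞ := { ξ ∈ Ê_∞ | ξ e = true }. Then the family D^∞ : E → Set Ê_∞ is a strongly tight family of domains on Ê_∞: D_⊥^∞ = ∅, D_{e ⊓ f}^∞ = D_e^∞ ∩ D_f^∞ for all e, f ∈ E, each D_e^∞ is a compact open subset of Ê_∞, and { D_e^∞ | e ∈ E } is a basis for the topology of Ê_∞. -/
/-!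
An ultracharacter `ξ` with `ξ g = false` has some `e` with `ξ e = true` and `e ⊓ g = ⊥`:
otherwise the filter generated by `{e | ξ e = true}` and `g` would be a strictly larger
character. Hence each condition `η a = ξ a` of a basic product neighbourhood of `ξ` is forced
by `η c = true` for a single `c` with `ξ c = true`, and finitely many such conditions by the
meet of the `c`'s; so the sets `D_e^∞` form a basis. They are clopen in the product topology,
hence compact when `Ê_∞` is.
-/

open TopologicalSpace

section

variable {E : Type*} [SemilatticeInf E] {ξ : E → Bool}

open scoped Classical in
noncomputable def adjoinChar (ξ : E → Bool) (g : E) : E → Bool :=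
  fun x => decide (∃ e, ξ e = true ∧ e ⊓ g ≤ x)

theorem adjoinChar_eq_true {g x : E} :
    adjoinChar ξ g x = true ↔ ∃ e, ξ e = true ∧ e ⊓ g ≤ x := by
  simp only [adjoinChar, decide_eq_true_eq]

variable [OrderBot E]

namespace IsChar

theorem map_inf_eq_true (h : IsChar ξ) {e f : E} :
    ξ (e ⊓ f) = true ↔ ξ e = true ∧ ξ f = true := by
  rw [h.1 e f, Bool.and_eq_true]

end IsChar

theorem IsChar.adjoinChar (h : IsChar ξ) {g : E} (hg : ∀ e, ξ e = true → e ⊓ g ≠ ⊥) :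
    IsChar (adjoinChar ξ g) := by
  refine ⟨fun x y => ?_, ?_, ?_⟩
  · rw [Bool.eq_iff_iff, Bool.and_eq_true, adjoinChar_eq_true, adjoinChar_eq_true,
      adjoinChar_eq_true]
    constructor
    · rintro ⟨e, he, hle⟩
      exact ⟨⟨e, he, hle.trans inf_le_left⟩, ⟨e, he, hle.trans inf_le_right⟩⟩
    · rintro ⟨⟨e₁, he₁, h₁⟩, ⟨e₂, he₂, h₂⟩⟩
      exact ⟨e₁ ⊓ e₂, h.map_inf_eq_true.mpr ⟨he₁, he₂⟩,
        le_inf ((inf_le_inf_right g inf_le_left).trans h₁)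
          ((inf_le_inf_right g inf_le_right).trans h₂)⟩
  · rw [← Bool.not_eq_true, adjoinChar_eq_true]
    rintro ⟨e, he, hle⟩
    exact hg e he (le_bot_iff.mp hle)
  · obtain ⟨e, he⟩ := h.2.2
    exact ⟨g, adjoinChar_eq_true.mpr ⟨e, he, inf_le_right⟩⟩

namespace IsUltra

theorem exists_inf_eq_bot (h : IsUltra ξ) {g : E} (hg : ξ g = false) :
    ∃ e, ξ e = true ∧ e ⊓ g = ⊥ := by
  by_contra! hcon
  have hle : ∀ e, ξ e = true → adjoinChar ξ g e = true := fun e he =>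
    adjoinChar_eq_true.mpr ⟨e, he, inf_le_left⟩
  obtain ⟨e, he⟩ := h.1.2.2
  have hgg : adjoinChar ξ g g = true := adjoinChar_eq_true.mpr ⟨e, he, inf_le_right⟩
  rw [h.2 _ (h.1.adjoinChar hcon) hle, hg] at hgg
  exact Bool.false_ne_true hgg

theorem exists_forall_apply_eq (h : IsUltra ξ) (a : E) :
    ∃ c, ξ c = true ∧ ∀ η, IsChar η → η c = true → η a = ξ a := by
  cases ha : ξ a with
  | true => exact ⟨a, ha, fun η _ hηa => hηa⟩
  | false =>
    obtain ⟨c, hc, hca⟩ := h.exists_inf_eq_bot ha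
    refine ⟨c, hc, fun η hη hηc => ?_⟩
    have hbot := hη.1 c a
    rwa [hca, hη.2.1, hηc, Bool.true_and, eq_comm] at hbot

theorem exists_forall_mem_apply_eq (h : IsUltra ξ) (I : Finset E) :
    ∃ e, ξ e = true ∧ ∀ η, IsChar η → η e = true → ∀ a ∈ I, η a = ξ a := by
  classical
  induction I using Finset.induction_on with
  | empty =>
    obtain ⟨e, he⟩ := h.1.2.2
    exact ⟨e, he, fun _ _ _ _ ha => absurd ha (Finset.notMem_empty _)⟩
  | insert a I _ ih =>
    obtain ⟨e, he, hI⟩ := ih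
    obtain ⟨c, hc, ha⟩ := h.exists_forall_apply_eq a
    refine ⟨e ⊓ c, h.1.map_inf_eq_true.mpr ⟨he, hc⟩, fun η hη hηec => ?_⟩
    obtain ⟨hηe, hηc⟩ := hη.map_inf_eq_true.mp hηec
    exact Finset.forall_mem_insert _ _ _ |>.mpr ⟨ha η hη hηc, hI η hη hηe⟩

end IsUltra

theorem isClopen_setOf_apply_eq_true {α : Type*} {P : (α → Bool) → Prop} (a : α) :
    IsClopen {ξ : {ξ : α → Bool // P ξ} | ξ.1 a = true} :=
  (isClopen_discrete {true}).preimage ((continuous_apply a).comp continuous_subtype_val)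

theorem isTopologicalBasis_setOf_ultra_apply_eq_true :
    IsTopologicalBasis
      (Set.range fun e : E => {ξ : {ξ : E → Bool // IsUltra ξ} | ξ.1 e = true}) := by
  refine isTopologicalBasis_of_isOpen_of_nhds ?_ fun ξ U hξU hU => ?_
  · rintro _ ⟨e, rfl⟩
    exact (isClopen_setOf_apply_eq_true e).isOpen
  obtain ⟨V, hV, rfl⟩ := isOpen_induced_iff.mp hU
  obtain ⟨I, u, hu, hIV⟩ := isOpen_pi_iff.mp hV ξ.1 hξU
  obtain ⟨e, he, hagree⟩ := ξ.2.exists_forall_mem_apply_eq I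
  refine ⟨_, ⟨e, rfl⟩, he, fun η hη => hIV fun a ha => ?_⟩
  rw [hagree η.1 η.2.1 hη a ha]
  exact (hu a ha).2

end

/-- if the ultracharacter space `Ê_∞` of a meet-semilattice `E` with
least element `⊥` is compact, then `e ↦ D_e^∞ = { ξ ∈ Ê_∞ | ξ e = true }` is a
strongly tight family of domains on `Ê_∞`. -/
theorem ultraChar_domains_stronglyTight {E : Type*} [SemilatticeInf E]
    [OrderBot E] (hc : CompactSpace {ξ : E → Bool // IsUltra ξ}) :
    StronglyTightFamily E {ξ : E → Bool // IsUltra ξ}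
      (fun e => {ξ : {ξ : E → Bool // IsUltra ξ} | ξ.1 e = true}) := by
  refine ⟨?_, fun e f => Set.ext fun ξ => ξ.2.1.map_inf_eq_true,
    fun e => (isClopen_setOf_apply_eq_true e).isClosed.isCompact,
    fun e => (isClopen_setOf_apply_eq_true e).isOpen,
    isTopologicalBasis_setOf_ultra_apply_eq_true⟩
  exact Set.eq_empty_of_forall_notMem fun ξ hξ =>
    Bool.false_ne_true (ξ.2.1.2.1.symm.trans hξ)
end
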